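/- The semicascade generated by an affine self-map φ(x) = Ax + b of 𝕋^d is tame if and only if A^p = A^q for some nonnegative integers p ≠ q. -/

import Mathlib

open Filter Topology

noncomputable def affApply {d : ℕ} (A : Matrix (Fin d) (Fin d) ℤ)
    (b : Fin d → AddCircle (2 * Real.pi)) (x : Fin d → AddCircle (2 * Real.pi)) :
    Fin d → AddCircle (2 * Real.pi) :=
  fun i => (∑ j, A i j • x j) + b i

/-!
If `A ^ p = A ^ q` with `p ≠ q`, the powers of `A` form a finite set, so along a subsequence of
any sequence of iterates the linear part `A ^ n` is constant while the translation part `φ^n 0`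
converges in the compact torus.

Conversely, if the powers of `A` form an infinite set, some entry `(A ^ n) a c` takes infinitely
many values, and tameness yields integers `mᵢ → ∞` such that `mᵢ • t` converges for every `t` in
the circle. The characters `e_{mᵢ}` then converge boundedly to some `F` with `‖F‖ = 1`. By bounded
convergence the Fourier coefficients `F̂(mᵢ)` tend to `∫ ‖F‖² = 1`, yet each `F̂(mⱼ)` is the limit
of `ê_{mᵢ}(mⱼ)`, which vanishes as soon as `mᵢ ≠ mⱼ`.
-/

open MeasureTheory

theorem Set.Infinite.exists_infinite_range_apply {α ι : Type*} [Finite ι] {β : ι → Type*}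
    {f : α → ∀ i, β i} (h : (Set.range f).Infinite) :
    ∃ i, (Set.range fun x => f x i).Infinite := by
  by_contra! hfin
  exact h ((Set.Finite.pi hfin).subset (Set.range_subset_iff.2 fun x => by simp))

theorem Set.Infinite.exists_injective_comp {α β : Type*} {f : α → β}
    (h : (Set.range f).Infinite) : ∃ n : ℕ → α, (f ∘ n).Injective := by
  choose n hn using fun j => (h.natEmbedding _ j).2
  refine ⟨n, fun i j hij => (h.natEmbedding _).injective (Subtype.ext ?_)⟩
  exact (hn i).symm.trans (hij.trans (hn j))

theorem finite_range_pow_iff {M : Type*} [Monoid M] (a : M) :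
    (Set.range (a ^ · : ℕ → M)).Finite ↔ ∃ p q, p ≠ q ∧ a ^ p = a ^ q := by
  constructor
  · intro h
    by_contra! hne
    exact Set.infinite_range_of_injective (fun p q hpq => by_contra fun h' => hne p q h' hpq) h
  · rintro ⟨p, q, hpq, h⟩
    wlog hlt : p < q generalizing p q
    · exact this q p hpq.symm h.symm (hpq.lt_or_gt.resolve_left hlt)
    have hmem : ∀ N, a ^ N ∈ (a ^ ·) '' Set.Iio q := by
      intro N
      induction N using Nat.strong_induction_on with
      | _ N ih =>
        by_cases hN : N < q
        · exact ⟨N, hN, rfl⟩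
        · have : a ^ N = a ^ (N - (q - p)) := by
            rw [show N = N - q + q by omega, pow_add, ← h, ← pow_add]
            congr 1
            omega
          exact this ▸ ih _ (by omega)
    exact ((Set.finite_Iio q).image _).subset (Set.range_subset_iff.2 hmem)

namespace Matrix

variable {m n o R G : Type*} [Fintype n] [Semiring R] [AddCommMonoid G] [Module R G]

/-- `Matrix.mulVec` only multiplies vectors with entries in `R`; this lets `M` act on vectors with
entries in an `R`-module, such as `ℤ`-matrices on points of a torus. -/
def smulVec (M : Matrix m n R) (x : n → G) : m → G := fun i => ∑ j, M i j • x j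

theorem smulVec_add (M : Matrix m n R) (x y : n → G) :
    M.smulVec (x + y) = M.smulVec x + M.smulVec y := by
  ext i
  simp [smulVec, Finset.sum_add_distrib]

theorem smulVec_zero (M : Matrix m n R) : M.smulVec (0 : n → G) = 0 := by
  ext i
  simp [smulVec]

theorem one_smulVec [DecidableEq n] (x : n → G) : (1 : Matrix n n R).smulVec x = x := by
  ext i
  simp [smulVec, Matrix.one_apply]

theorem mul_smulVec [Fintype o] (M : Matrix m n R) (N : Matrix n o R) (x : o → G) :
    (M * N).smulVec x = M.smulVec (N.smulVec x) := by
  ext i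
  simp only [smulVec, Matrix.mul_apply, Finset.sum_smul, mul_smul, Finset.smul_sum]
  exact Finset.sum_comm

theorem smulVec_single_apply [DecidableEq n] (M : Matrix m n R) (j : n) (t : G) (i : m) :
    M.smulVec (Pi.single j t) i = M i j • t := by
  simp [smulVec, Pi.single_apply]

theorem _root_.Filter.Tendsto.matrix_smulVec [TopologicalSpace R] [TopologicalSpace G]
    [ContinuousSMul R G] [ContinuousAdd G] {ι : Type*} {l : Filter ι} {M : ι → Matrix m n R}
    {x : ι → n → G} {B : Matrix m n R} {y : n → G} (hM : Tendsto M l (𝓝 B))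
    (hx : Tendsto x l (𝓝 y)) : Tendsto (fun i => (M i).smulVec (x i)) l (𝓝 (B.smulVec y)) := by
  have : Continuous fun p : Matrix m n R × (n → G) => p.1.smulVec p.2 := by
    unfold smulVec
    fun_prop
  exact (this.tendsto _).comp (hM.prodMk_nhds hx)

end Matrix

namespace AddCircle

variable {T : ℝ}

theorem norm_fourier_apply (n : ℤ) (t : AddCircle T) : ‖fourier n t‖ = 1 := by
  rw [fourier_apply, Circle.norm_coe]

variable [Fact (0 < T)] {ι : Type*} {l : Filter ι} [l.IsCountablyGenerated]

theorem tendsto_fourierCoeff_of_tendsto {G : ι → AddCircle T → ℂ} {g : AddCircle T → ℂ}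
    (hG : ∀ i, AEStronglyMeasurable (G i) haarAddCircle) (C : ℝ) (hC : ∀ i t, ‖G i t‖ ≤ C)
    (hlim : ∀ t, Tendsto (G · t) l (𝓝 (g t))) (n : ℤ) :
    Tendsto (fun i => fourierCoeff (G i) n) l (𝓝 (fourierCoeff g n)) :=
  tendsto_integral_filter_of_norm_le_const
    (Eventually.of_forall fun i => (fourier (-n)).continuous.aestronglyMeasurable.smul (hG i))
    ⟨C, Eventually.of_forall fun i => Eventually.of_forall fun t => by
      rw [norm_smul, norm_fourier_apply, one_mul]
      exact hC i t⟩
    (Eventually.of_forall fun t => (hlim t).const_smul _)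

theorem not_tendsto_fourier [l.NeBot] {m : ι → ℤ} (hm : Tendsto m l cofinite)
    (F : AddCircle T → ℂ) : ¬ ∀ t, Tendsto (fun i => fourier (m i) t) l (𝓝 (F t)) := by
  intro hF
  have hF_norm : ∀ t, ‖F t‖ = 1 := fun t =>
    tendsto_nhds_unique (hF t).norm (by simp only [norm_fourier_apply, tendsto_const_nhds])
  have hF_meas : AEStronglyMeasurable F haarAddCircle :=
    aestronglyMeasurable_of_tendsto_ae l
      (fun i => (fourier (m i)).continuous.aestronglyMeasurable) (Eventually.of_forall hF)
  have h_one : Tendsto (fun i => fourierCoeff F (m i)) l (𝓝 1) := by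
    have hlim : ∀ t, Tendsto (fun i => fourier (-m i) t • F t) l (𝓝 1) := fun t => by
      have := ((Complex.continuous_conj.tendsto _).comp (hF t)).mul_const (F t)
      simp only [Function.comp_def, ← fourier_neg] at this
      rwa [Complex.conj_mul', hF_norm, Complex.ofReal_one, one_pow] at this
    rw [show (1 : ℂ) = ∫ _ : AddCircle T, 1 ∂haarAddCircle by simp]
    exact tendsto_integral_filter_of_norm_le_const
      (Eventually.of_forall fun i =>
        (fourier (-m i)).continuous.aestronglyMeasurable.smul hF_meas)
      ⟨1, Eventually.of_forall fun i => Eventually.of_forall fun t => by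
        rw [norm_smul, norm_fourier_apply, hF_norm, one_mul]⟩
      (Eventually.of_forall hlim)
  have h_zero : ∀ j, fourierCoeff F (m j) = 0 := fun j => by
    refine tendsto_nhds_unique (tendsto_fourierCoeff_of_tendsto
      (fun i => (fourier (m i)).continuous.aestronglyMeasurable) 1
      (fun i t => (norm_fourier_apply _ t).le) hF (m j)) (tendsto_const_nhds.congr' ?_)
    filter_upwards [hm.eventually (Set.finite_singleton (m j)).compl_mem_cofinite] with i hi
    rw [fourierCoeff_fourier, Pi.single_eq_of_ne' hi]
  exact one_ne_zero (tendsto_nhds_unique h_one (by simp only [h_zero, tendsto_const_nhds]))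

theorem not_forall_exists_tendsto_zsmul [l.NeBot] {m : ι → ℤ} (hm : Tendsto m l cofinite) :
    ¬ ∀ t : AddCircle T, ∃ L, Tendsto (fun i => m i • t) l (𝓝 L) := by
  intro h
  choose L hL using h
  refine not_tendsto_fourier hm (fun t => fourier 1 (L t)) fun t => ?_
  simpa only [Function.comp_def, fourier_apply, one_zsmul] using
    ((fourier 1).continuous.tendsto _).comp (hL t)

end AddCircle

def IsTame {X : Type*} [TopologicalSpace X] (f : X → X) : Prop :=
  ∀ n : ℕ → ℕ, ∃ k : ℕ → ℕ, StrictMono k ∧ ∀ x, ∃ L, Tendsto (fun i => f^[n (k i)] x) atTop (𝓝 L)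

section affApply

variable {d : ℕ} {A : Matrix (Fin d) (Fin d) ℤ} {b : Fin d → AddCircle (2 * Real.pi)}

theorem affApply_apply (x : Fin d → AddCircle (2 * Real.pi)) :
    affApply A b x = A.smulVec x + b :=
  rfl

theorem iterate_affApply (N : ℕ) (x : Fin d → AddCircle (2 * Real.pi)) :
    (affApply A b)^[N] x = (A ^ N).smulVec x + (affApply A b)^[N] 0 := by
  induction N generalizing x with
  | zero => simp [Matrix.one_smulVec]
  | succ N ih =>
    rw [Function.iterate_succ_apply', Function.iterate_succ_apply', ih x, ih 0, affApply_apply,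
      affApply_apply, Matrix.smulVec_zero, zero_add, Matrix.smulVec_add, pow_succ',
      Matrix.mul_smulVec, add_assoc]

local instance : Fact (0 < 2 * Real.pi) := ⟨Real.two_pi_pos⟩

theorem isTame_affApply_of_finite_range_pow (h : (Set.range (A ^ ·)).Finite) :
    IsTame (affApply A b) := by
  intro n
  obtain ⟨⟨B, c⟩, -, k, hk, hlim⟩ := (h.isCompact.prod isCompact_univ).tendsto_subseq
    (x := fun i => (A ^ n i, (affApply A b)^[n i] 0)) fun i => ⟨⟨n i, rfl⟩, trivial⟩
  refine ⟨k, hk, fun x => ⟨B.smulVec x + c, ?_⟩⟩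
  have hA : Tendsto (fun i => A ^ n (k i)) atTop (𝓝 B) := hlim.fst_nhds
  have hc : Tendsto (fun i => (affApply A b)^[n (k i)] 0) atTop (𝓝 c) := hlim.snd_nhds
  refine ((hA.matrix_smulVec tendsto_const_nhds).add hc).congr fun i => ?_
  exact (iterate_affApply _ x).symm

theorem finite_range_pow_of_isTame (h : IsTame (affApply A b)) :
    (Set.range (A ^ ·)).Finite := by
  refine Set.not_infinite.mp fun hinf => ?_
  obtain ⟨a, ha⟩ := hinf.exists_infinite_range_apply
  obtain ⟨c, hc⟩ := ha.exists_infinite_range_apply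
  obtain ⟨n, hn⟩ := hc.exists_injective_comp
  obtain ⟨k, hk, hlim⟩ := h n
  have hm : Tendsto (fun i => (A ^ n (k i)) a c) atTop cofinite :=
    Nat.cofinite_eq_atTop ▸ (hn.comp hk.injective).tendsto_cofinite
  refine AddCircle.not_forall_exists_tendsto_zsmul (T := 2 * Real.pi) hm fun t => ?_
  obtain ⟨L, hL⟩ := hlim (Pi.single c t)
  obtain ⟨L₀, hL₀⟩ := hlim 0
  refine ⟨L a - L₀ a, ((continuous_apply a).tendsto _).comp (hL.sub hL₀) |>.congr fun i => ?_⟩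
  simp [iterate_affApply _ (Pi.single c t), Matrix.smulVec_single_apply]

end affApply

theorem stmt7 {d : ℕ} (A : Matrix (Fin d) (Fin d) ℤ)
    (b : Fin d → AddCircle (2 * Real.pi)) :
    (∀ n : ℕ → ℕ, ∃ k : ℕ → ℕ, StrictMono k ∧
        ∀ x, ∃ L, Tendsto (fun i => (affApply A b)^[n (k i)] x) atTop (𝓝 L)) ↔
      ∃ p q : ℕ, p ≠ q ∧ A ^ p = A ^ q :=
  (Iff.intro finite_range_pow_of_isTame isTame_affApply_of_finite_range_pow).trans
    (finite_range_pow_iff A)
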